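/- Let E ⊆ ℝ^V (V finite, partitioned into {S_j}_{j∈J}) be a subspace such that Σ_j Σ_{v∈S_j}|f(v) − f_j| ≤ γ Σ_v|f(v)| for all f ∈ E, where f_j = ⟨ζ_j, f⟩ with ζ_j ≥ 0 nonnegative sampling functions and 0 < γ < 1/2. Let the sampling map Q : E → ℝ^J, Qf = (f_j), be injective, and define Θ on R(Q) by Θ((f_j)) = Σ_v f(v) − ((1−2γ)/(1−γ)) Σ_j f_j |S_j|, where f = Q⁻¹((f_j)). Then for every (f_j) ∈ R(Q) of the form (f_j) = (g_j) + (h_j) with Σ_j |g_j||S_j| ≤ 1 and h_j ≥ 0 for all j, one has Θ((f_j)) ≥ −2/(1−γ). -/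

import Mathlib

open Finset

/-! Write `f_j` for the samples, `A = Σ_v f(v)`, `B = Σ_j f_j |S_j|`, `N = |||(f_j)|||` and
`T = Σ_v |f(v)|`. Comparing `f` with its samples block by block, the approximation inequality
gives `A - B ≥ -γ T` and `(1 - γ) T ≤ N`. The decomposition into a part in the unit ball and a
nonnegative part gives `N ≤ B + 2`. Eliminating `T` yields `(1 - γ) A - (1 - 2γ) B ≥ -2γ ≥ -2`. -/

section Partition

variable {V J : Type*} [Fintype V] [Fintype J] {S : J → Finset V}

theorem sum_eq_sum_sum_of_partition (hdisj : ∀ i j, i ≠ j → Disjoint (S i) (S j))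
    (hcover : ∀ v, ∃ j, v ∈ S j) (F : V → ℝ) :
    ∑ v, F v = ∑ j, ∑ v ∈ S j, F v := by
  classical
  have hunion : univ.biUnion S = univ := by
    ext v
    simpa using hcover v
  rw [← sum_biUnion fun i _ j _ hij => hdisj i j hij, hunion]

theorem abs_sum_sub_sum_mul_card_le (hdisj : ∀ i j, i ≠ j → Disjoint (S i) (S j))
    (hcover : ∀ v, ∃ j, v ∈ S j) (f : V → ℝ) (c : J → ℝ) :
    |∑ v, f v - ∑ j, c j * #(S j)| ≤ ∑ j, ∑ v ∈ S j, |f v - c j| := by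
  have hdiff : ∑ v, f v - ∑ j, c j * #(S j) = ∑ j, ∑ v ∈ S j, (f v - c j) := by
    simp only [sum_eq_sum_sum_of_partition hdisj hcover f, sum_sub_distrib, sum_const,
      nsmul_eq_mul, mul_comm]
  rw [hdiff]
  exact (abs_sum_le_sum_abs _ _).trans (sum_le_sum fun j _ => abs_sum_le_sum_abs _ _)

theorem sum_abs_le_sum_abs_sub_add (hdisj : ∀ i j, i ≠ j → Disjoint (S i) (S j))
    (hcover : ∀ v, ∃ j, v ∈ S j) (f : V → ℝ) (c : J → ℝ) :
    ∑ v, |f v| ≤ ∑ j, ∑ v ∈ S j, |f v - c j| + ∑ j, |c j| * #(S j) := by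
  rw [sum_eq_sum_sum_of_partition hdisj hcover, ← sum_add_distrib]
  refine sum_le_sum fun j _ => ?_
  calc ∑ v ∈ S j, |f v| ≤ ∑ v ∈ S j, (|f v - c j| + |c j|) :=
        sum_le_sum fun v _ => by linarith [abs_sub_abs_le_abs_sub (f v) (c j)]
    _ = ∑ v ∈ S j, |f v - c j| + |c j| * #(S j) := by
        rw [sum_add_distrib, sum_const, nsmul_eq_mul, mul_comm]

end Partition

theorem abs_le_add_two_mul_abs_of_eq_add {a b c : ℝ} (habc : a = b + c) (hc : 0 ≤ c) :
    |a| ≤ a + 2 * |b| := by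
  rcases abs_cases a with ⟨ha, -⟩ | ⟨ha, -⟩ <;> cases abs_cases b <;> linarith

theorem sum_abs_mul_le_sum_mul_add {J : Type*} (s : Finset J) {a b c w : J → ℝ}
    (habc : ∀ j, a j = b j + c j) (hc : ∀ j, 0 ≤ c j) (hw : ∀ j, 0 ≤ w j) :
    ∑ j ∈ s, |a j| * w j ≤ ∑ j ∈ s, a j * w j + 2 * ∑ j ∈ s, |b j| * w j := by
  rw [mul_sum, ← sum_add_distrib]
  refine sum_le_sum fun j _ => ?_
  have := mul_le_mul_of_nonneg_right (abs_le_add_two_mul_abs_of_eq_add (habc j) (hc j)) (hw j)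
  linarith

theorem neg_two_div_le_of_bounds {γ A B T N : ℝ} (hγ0 : 0 ≤ γ) (hγ1 : γ < 1)
    (hAB : -(γ * T) ≤ A - B) (hTN : (1 - γ) * T ≤ N) (hNB : N ≤ B + 2) :
    -(2 / (1 - γ)) ≤ A - ((1 - 2 * γ) / (1 - γ)) * B := by
  have hpos : 0 < 1 - γ := by linarith
  have hcombined : -2 ≤ (1 - γ) * A - (1 - 2 * γ) * B := by
    linarith [mul_le_mul_of_nonneg_left hAB hpos.le, mul_le_mul_of_nonneg_left (hTN.trans hNB) hγ0]
  rw [neg_div', div_mul_eq_mul_div, sub_div' hpos.ne', mul_comm A]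
  exact div_le_div_of_nonneg_right hcombined hpos.le

theorem stmt14_general {V J : Type*} [Fintype V] [Fintype J]
    (S : J → Finset V)
    (hdisj : ∀ i j, i ≠ j → Disjoint (S i) (S j))
    (hcover : ∀ v : V, ∃ j, v ∈ S j)
    (ζ : J → V → ℝ)
    (γ : ℝ) (hγ0 : 0 < γ) (hγ : γ < 1 / 2)
    (E : Submodule ℝ (V → ℝ))
    (happrox : ∀ f ∈ E, ∑ j, ∑ v ∈ S j, |f v - ∑ u, ζ j u * f u| ≤ γ * ∑ v, |f v|)
    (f : V → ℝ) (hf : f ∈ E)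
    (g h : J → ℝ)
    (hdecomp : ∀ j, (∑ u, ζ j u * f u) = g j + h j)
    (hg : ∑ j, |g j| * ((S j).card : ℝ) ≤ 1)
    (hh : ∀ j, 0 ≤ h j) :
    -(2 / (1 - γ)) ≤
      ∑ v, f v - ((1 - 2 * γ) / (1 - γ)) * ∑ j, (∑ u, ζ j u * f u) * ((S j).card : ℝ) := by
  have hAB := abs_sum_sub_sum_mul_card_le hdisj hcover f fun j => ∑ u, ζ j u * f u
  have hTN := sum_abs_le_sum_abs_sub_add hdisj hcover f fun j => ∑ u, ζ j u * f u
  have hNB := sum_abs_mul_le_sum_mul_add univ hdecomp hh fun j => (S j).card.cast_nonneg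
  have hε := happrox f hf
  exact neg_two_div_le_of_bounds hγ0.le (by linarith) (neg_le_of_abs_le (hAB.trans hε))
    (N := ∑ j, |∑ u, ζ j u * f u| * #(S j)) (by linarith) (by linarith)

/-- Lemma 6.2: lower bound for the functional `Θ` on `F ∩ (U + C)`. With nonnegative sampling
functions `ζ_j`, injective sampling map `Q` on the subspace `E`, and the `ℓ¹` approximation
inequality with `0 < γ < 1/2`: if the sample vector of `f ∈ E` decomposes as `(g_j) + (h_j)`
with `Σ_j |g_j||S_j| ≤ 1` and `h_j ≥ 0`, then
`Σ_v f(v) − ((1−2γ)/(1−γ)) Σ_j f_j |S_j| ≥ −2/(1−γ)`. -/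
theorem stmt14 {V J : Type*} [Fintype V] [Fintype J]
    (S : J → Finset V)
    (hdisj : ∀ i j, i ≠ j → Disjoint (S i) (S j))
    (hcover : ∀ v : V, ∃ j, v ∈ S j)
    (ζ : J → V → ℝ) (hζnn : ∀ j v, 0 ≤ ζ j v) (hsupp : ∀ j, ∀ v ∉ S j, ζ j v = 0)
    (γ : ℝ) (hγ0 : 0 < γ) (hγ : γ < 1 / 2)
    (E : Submodule ℝ (V → ℝ))
    (happrox : ∀ f ∈ E, ∑ j, ∑ v ∈ S j, |f v - ∑ u, ζ j u * f u| ≤ γ * ∑ v, |f v|)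
    (hinj : ∀ f ∈ E, ∀ g ∈ E,
      (∀ j, (∑ u, ζ j u * f u) = ∑ u, ζ j u * g u) → f = g)
    (f : V → ℝ) (hf : f ∈ E)
    (g h : J → ℝ)
    (hdecomp : ∀ j, (∑ u, ζ j u * f u) = g j + h j)
    (hg : ∑ j, |g j| * ((S j).card : ℝ) ≤ 1)
    (hh : ∀ j, 0 ≤ h j) :
    -(2 / (1 - γ)) ≤
      ∑ v, f v - ((1 - 2 * γ) / (1 - γ)) * ∑ j, (∑ u, ζ j u * f u) * ((S j).card : ℝ) :=
  stmt14_general S hdisj hcover ζ γ hγ0 hγ E happrox f hf g h hdecomp hg hh
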